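/- Let n ≥ 1 and equip ℤⁿ with the componentwise order. Let E be a finite-dimensional complex vector space and D : E\{0} → ℤⁿ a Weil decoration (scalar invariant, D(e+e') ≥ min(D(e), D(e')) componentwise whenever e, e', e+e' ≠ 0). Define μ ∈ ℤⁿ by μ_i = min{D(e)_i : e ∈ E\{0}} and λ ∈ ℤⁿ by λ_i = max{D(e)_i : e ∈ E\{0}} (both exist since the image of D is finite and nonempty). Then μ is the minimum value of D: there exists e₀ ∈ E\{0} with D(e₀)_i = μ_i simultaneously for all i. -/
import Mathlib


/-- For a Weil decoration `D : E \ {0} → ℤⁿ` (componentwise order), the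
componentwise minimum `μ` of the image of `D` is attained by a single
element: there is `e₀ ≠ 0` with `D e₀ = μ`. -/
theorem weil_decoration_componentwise_min_attained
    {E : Type*} [AddCommGroup E] [Module ℂ E] [FiniteDimensional ℂ E] [Nontrivial E]
    (n : ℕ) (hn : 1 ≤ n) (D : E → (Fin n → ℤ))
    (hscal : ∀ (c : ℂ), c ≠ 0 → ∀ e : E, e ≠ 0 → D (c • e) = D e)
    (hsum : ∀ e e' : E, e ≠ 0 → e' ≠ 0 → e + e' ≠ 0 → D e ⊓ D e' ≤ D (e + e'))
    (μ : Fin n → ℤ)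
    (hμ : ∀ i, IsLeast {x : ℤ | ∃ e : E, e ≠ 0 ∧ D e i = x} (μ i)) :
    ∃ e₀ : E, e₀ ≠ 0 ∧ D e₀ = μ := by
  -- the set of vectors where coordinate `i` exceeds the minimum is a proper subspace
  let p : Fin n → Subspace ℂ E := fun i =>
    { carrier := {e : E | e = 0 ∨ μ i < D e i}
      zero_mem' := Or.inl rfl
      add_mem' := by
        intro a b ha hb
        by_cases ha0 : a = 0
        · simpa [ha0] using hb
        by_cases hb0 : b = 0
        · simpa [hb0] using ha
        have ha' := ha.resolve_left ha0
        have hb' := hb.resolve_left hb0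
        by_cases hab : a + b = 0
        · exact Or.inl hab
        · refine Or.inr (lt_of_lt_of_le (lt_min ha' hb') ?_)
          simpa using hsum a b ha0 hb0 hab i
      smul_mem' := by
        intro c a ha
        by_cases ha0 : a = 0
        · exact Or.inl (by simp [ha0])
        by_cases hc : c = 0
        · exact Or.inl (by simp [hc])
        exact Or.inr (by rw [hscal c hc a ha0]; exact ha.resolve_left ha0) }
  have hne : ∀ i, p i ≠ ⊤ := by
    intro i hi
    obtain ⟨⟨e, he0, heD⟩, -⟩ := hμ i
    have : e ∈ p i := hi ▸ Submodule.mem_top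
    rcases this with h | h
    · exact he0 h
    · omega
  have hcov : ⋃ i, ((p i : Set E)) ≠ Set.univ := by
    intro h
    obtain ⟨i, hi⟩ := Subspace.exists_eq_top_of_iUnion_eq_univ h
    exact hne i hi
  obtain ⟨e₀, he₀⟩ : ∃ e₀ : E, e₀ ∉ ⋃ i, (p i : Set E) := by
    by_contra h
    push_neg at h
    exact hcov (Set.eq_univ_of_forall h)
  simp only [Set.mem_iUnion, not_exists] at he₀
  have h0 : e₀ ≠ 0 := by
    intro h
    exact he₀ ⟨0, hn⟩ (Or.inl h)
  refine ⟨e₀, h0, funext fun i => ?_⟩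
  have hle : μ i ≤ D e₀ i := (hμ i).2 ⟨e₀, h0, rfl⟩
  have hnlt : ¬ μ i < D e₀ i := fun h => he₀ i (Or.inr h)
  omega
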